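/- arXiv:2110.03801 — 4 statements merged into one kernel-verified Lean document; each statement's English description precedes it below -/
import Mathlib

section
/- Let M, N ≥ 1 be integers, let a_b ∈ ℂ^M be nonzero, let h_d ∈ ℂ^M satisfy a_b^H h_d ≠ 0, let w ∈ ℂ^N, and let c > 0. Then sup over φ ∈ ℝ^N of ‖h_d + c·(∑_{n=1}^N e^{iφ_n} w_n)·a_b‖₂² equals ‖h_d‖₂² + 2c·(∑_{n=1}^N |w_n|)·|a_b^H h_d| + c²·‖a_b‖₂²·(∑_{n=1}^N |w_n|)², and this supremum is attained at the phase choice φ_n = arg(a_b^H h_d) − arg(w_n). -/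
/-!
Writing `S = ∑ₙ e^{iφₙ} wₙ` and `D = a_bᴴ h_d`, the SNR expands as
`‖h_d‖² + 2c Re(S · conj D) + c² |S|² ‖a_b‖²`. Both `Re(S · conj D) ≤ |S| |D|` and
`|S| ≤ ∑ₙ |wₙ|` become equalities exactly when every term `e^{iφₙ} wₙ` has argument `arg D`.
-/

open Complex

noncomputable section

/-- Squared Euclidean norm of a complex vector. -/
def cnormSq {m : ℕ} (v : Fin m → ℂ) : ℝ := ∑ i, ‖v i‖ ^ 2

/-- Hermitian inner product `a^H b`. -/
def dotH {m : ℕ} (a b : Fin m → ℂ) : ℂ := ∑ i, (starRingEnd ℂ) (a i) * b i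

open scoped InnerProductSpace

namespace Complex

theorem exp_I_mul_arg_mul_conj (D : ℂ) :
    exp (I * D.arg) * (starRingEnd ℂ) D = ‖D‖ := by
  conv_lhs => rw [← norm_mul_exp_arg_mul_I D]
  rw [map_mul, ← exp_conj]
  simp [mul_comm I, mul_left_comm (exp _), ← exp_add]

theorem norm_sum_exp_I_mul_mul_le {ι : Type*} (s : Finset ι) (φ : ι → ℝ) (w : ι → ℂ) :
    ‖∑ n ∈ s, exp (I * φ n) * w n‖ ≤ ∑ n ∈ s, ‖w n‖ :=
  (norm_sum_le _ _).trans_eq <| Finset.sum_congr rfl fun n _ => by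
    rw [norm_mul, mul_comm I, norm_exp_ofReal_mul_I, one_mul]

theorem exp_I_mul_sub_arg_mul (θ : ℝ) (w : ℂ) :
    exp (I * ↑(θ - w.arg)) * w = exp (I * θ) * ‖w‖ := by
  conv_lhs => arg 2; rw [← norm_mul_exp_arg_mul_I w]
  rw [mul_left_comm, mul_comm _ (exp _), ← exp_add]
  push_cast
  ring_nf

theorem sum_exp_I_mul_sub_arg_mul {ι : Type*} (s : Finset ι) (θ : ℝ) (w : ι → ℂ) :
    ∑ n ∈ s, exp (I * ↑(θ - (w n).arg)) * w n = exp (I * θ) * ↑(∑ n ∈ s, ‖w n‖) := by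
  simp only [exp_I_mul_sub_arg_mul, ← Finset.mul_sum, ofReal_sum]

end Complex

section InnerProductSpace

variable {𝕜 E : Type*} [RCLike 𝕜] [NormedAddCommGroup E] [InnerProductSpace 𝕜 E]

theorem norm_add_smul_sq (x y : E) (z : 𝕜) :
    ‖x + z • y‖ ^ 2 = ‖x‖ ^ 2 + 2 * RCLike.re (z * ⟪x, y⟫_𝕜) + ‖z‖ ^ 2 * ‖y‖ ^ 2 := by
  rw [@norm_add_sq 𝕜, inner_smul_right, norm_smul, mul_pow]

theorem norm_add_smul_sq_le (x y : E) {z : 𝕜} {R : ℝ} (hz : ‖z‖ ≤ R) :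
    ‖x + z • y‖ ^ 2 ≤ ‖x‖ ^ 2 + 2 * R * ‖⟪y, x⟫_𝕜‖ + R ^ 2 * ‖y‖ ^ 2 := by
  have hre : RCLike.re (z * ⟪x, y⟫_𝕜) ≤ R * ‖⟪y, x⟫_𝕜‖ :=
    calc RCLike.re (z * ⟪x, y⟫_𝕜) ≤ ‖z * ⟪x, y⟫_𝕜‖ := RCLike.re_le_norm _
      _ = ‖z‖ * ‖⟪y, x⟫_𝕜‖ := by rw [norm_mul, norm_inner_symm]
      _ ≤ R * ‖⟪y, x⟫_𝕜‖ := by gcongr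
  have hsq : ‖z‖ ^ 2 ≤ R ^ 2 := by gcongr
  rw [norm_add_smul_sq]
  nlinarith [norm_nonneg y]

end InnerProductSpace

theorem norm_add_smul_exp_arg_sq {E : Type*} [NormedAddCommGroup E] [InnerProductSpace ℂ E]
    (x y : E) {R : ℝ} (hR : 0 ≤ R) :
    ‖x + (R * exp (I * (⟪y, x⟫_ℂ).arg)) • y‖ ^ 2
      = ‖x‖ ^ 2 + 2 * R * ‖⟪y, x⟫_ℂ‖ + R ^ 2 * ‖y‖ ^ 2 := by
  have hz : ‖(R : ℂ) * exp (I * (⟪y, x⟫_ℂ).arg)‖ = R := by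
    rw [norm_mul, mul_comm I, norm_exp_ofReal_mul_I, norm_real, Real.norm_of_nonneg hR, mul_one]
  rw [norm_add_smul_sq, hz, ← inner_conj_symm x y, mul_assoc, exp_I_mul_arg_mul_conj,
    ← ofReal_mul, RCLike.re_to_complex, ofReal_re]
  ring

theorem cnormSq_eq_norm_sq {m : ℕ} (v : Fin m → ℂ) :
    cnormSq v = ‖(WithLp.toLp 2 v : EuclideanSpace ℂ (Fin m))‖ ^ 2 := by
  simp [cnormSq, EuclideanSpace.norm_sq_eq]

theorem dotH_eq_inner {m : ℕ} (a b : Fin m → ℂ) :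
    dotH a b = ⟪(WithLp.toLp 2 a : EuclideanSpace ℂ (Fin m)), WithLp.toLp 2 b⟫_ℂ := by
  simp [dotH, PiLp.inner_apply, mul_comm]

theorem cnormSq_add_mul {m : ℕ} (h a : Fin m → ℂ) (z : ℂ) :
    cnormSq (fun i => h i + z * a i)
      = ‖(WithLp.toLp 2 h : EuclideanSpace ℂ (Fin m)) + z • WithLp.toLp 2 a‖ ^ 2 := by
  rw [cnormSq_eq_norm_sq]
  rfl

theorem optimal_ris_phases_general (M N : ℕ)
    (a_b : Fin M → ℂ)
    (h_d : Fin M → ℂ)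
    (w : Fin N → ℂ) (c : ℝ) (hc : 0 < c) :
    IsGreatest
      (Set.range (fun φ : Fin N → ℝ =>
        cnormSq (fun m =>
          h_d m + (c : ℂ) * (∑ n, Complex.exp (Complex.I * (φ n : ℂ)) * w n) * a_b m)))
      (cnormSq h_d + 2 * c * (∑ n, ‖w n‖) * ‖dotH a_b h_d‖
        + c ^ 2 * cnormSq a_b * (∑ n, ‖w n‖) ^ 2) ∧
    cnormSq (fun m =>
        h_d m + (c : ℂ) *
          (∑ n, Complex.exp (Complex.I * (((dotH a_b h_d).arg - (w n).arg : ℝ) : ℂ)) * w n)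
          * a_b m)
      = cnormSq h_d + 2 * c * (∑ n, ‖w n‖) * ‖dotH a_b h_d‖
        + c ^ 2 * cnormSq a_b * (∑ n, ‖w n‖) ^ 2 := by
  set T := ∑ n, ‖w n‖ with hT
  have hcT : 0 ≤ c * T := mul_nonneg hc.le (Finset.sum_nonneg fun n _ => norm_nonneg _)
  have hbound : cnormSq h_d + 2 * c * T * ‖dotH a_b h_d‖ + c ^ 2 * cnormSq a_b * T ^ 2
      = ‖(WithLp.toLp 2 h_d : EuclideanSpace ℂ (Fin M))‖ ^ 2
        + 2 * (c * T) * ‖⟪WithLp.toLp 2 a_b, (WithLp.toLp 2 h_d : EuclideanSpace ℂ (Fin M))⟫_ℂ‖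
        + (c * T) ^ 2 * ‖(WithLp.toLp 2 a_b : EuclideanSpace ℂ (Fin M))‖ ^ 2 := by
    rw [cnormSq_eq_norm_sq, cnormSq_eq_norm_sq, dotH_eq_inner]
    ring
  have hopt : cnormSq (fun m => h_d m + (c : ℂ) *
      (∑ n, exp (I * (((dotH a_b h_d).arg - (w n).arg : ℝ) : ℂ)) * w n) * a_b m)
      = cnormSq h_d + 2 * c * T * ‖dotH a_b h_d‖ + c ^ 2 * cnormSq a_b * T ^ 2 := by
    rw [sum_exp_I_mul_sub_arg_mul, ← hT, cnormSq_add_mul, hbound,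
      ← norm_add_smul_exp_arg_sq _ _ hcT, dotH_eq_inner, ofReal_mul]
    ring_nf
  refine ⟨⟨⟨_, hopt⟩, ?_⟩, hopt⟩
  rintro _ ⟨φ, rfl⟩
  dsimp only
  rw [cnormSq_add_mul, hbound]
  refine norm_add_smul_sq_le _ _ ?_
  rw [norm_mul, norm_real, Real.norm_of_nonneg hc.le]
  exact mul_le_mul_of_nonneg_left (norm_sum_exp_I_mul_mul_le _ _ _) hc.le

/-- Optimal RIS phase configuration: the SNR `‖h_d + c (∑ₙ e^{iφₙ} wₙ) a_b‖₂²` over phase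
vectors `φ ∈ ℝ^N` has supremum
`‖h_d‖₂² + 2c (∑ₙ |wₙ|) |a_b^H h_d| + c² ‖a_b‖₂² (∑ₙ |wₙ|)²`, attained at
`φₙ = arg(a_b^H h_d) - arg(wₙ)`. -/
theorem optimal_ris_phases (M N : ℕ) (hM : 1 ≤ M) (hN : 1 ≤ N)
    (a_b : Fin M → ℂ) (hab : a_b ≠ 0)
    (h_d : Fin M → ℂ) (hd : dotH a_b h_d ≠ 0)
    (w : Fin N → ℂ) (c : ℝ) (hc : 0 < c) :
    IsGreatest
      (Set.range (fun φ : Fin N → ℝ =>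
        cnormSq (fun m =>
          h_d m + (c : ℂ) * (∑ n, Complex.exp (Complex.I * (φ n : ℂ)) * w n) * a_b m)))
      (cnormSq h_d + 2 * c * (∑ n, ‖w n‖) * ‖dotH a_b h_d‖
        + c ^ 2 * cnormSq a_b * (∑ n, ‖w n‖) ^ 2) ∧
    cnormSq (fun m =>
        h_d m + (c : ℂ) *
          (∑ n, Complex.exp (Complex.I * (((dotH a_b h_d).arg - (w n).arg : ℝ) : ℂ)) * w n)
          * a_b m)
      = cnormSq h_d + 2 * c * (∑ n, ‖w n‖) * ‖dotH a_b h_d‖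
        + c ^ 2 * cnormSq a_b * (∑ n, ‖w n‖) ^ 2 :=
  optimal_ris_phases_general M N a_b h_d w c hc
end
end

section
/- For every real α > 0, L(α·x)/√(1+x) → 2·√(α/π) as x → ∞. -/
/-!
The series `L` is a combination of two Kummer functions with Euler integral representations,
`L(z) = ₁F₁(1/2; 1; -z) + z ₁F₁(1/2; 2; -z)`, i.e.
`π L(z) = ∫₀¹ e^{-zt} t^{-1/2} (1-t)^{-1/2} dt + 2z ∫₀¹ e^{-zt} t^{-1/2} (1-t)^{1/2} dt`,
which follows by expanding `e^{-zt}` and integrating term by term against Beta densities.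
The first integral tends to `0` by dominated convergence. After the substitution `u = zt`,
`√z` times the second integral is `∫₀^z e^{-u} u^{-1/2} (1 - u/z)^{1/2} du → Γ(1/2) = √π`.
Hence `L(z) ~ 2 √(z/π)`.
-/

noncomputable section

/-- Laguerre function `L(z) = L_{1/2}(-z) = ₁F₁(-1/2;1;-z)`. -/
def Lhalf (z : ℝ) : ℝ :=
  ∑' n : ℕ, (ascPochhammer ℝ n).eval (-(1/2)) / ((n.factorial : ℝ))^2 * (-z) ^ n

open Filter

open Real Set MeasureTheory Topology

section BetaIntegral

variable {a b : ℝ}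

lemma rpow_mul_one_sub_rpow_nonneg {t : ℝ} (ht₀ : 0 ≤ t) (ht₁ : t ≤ 1) :
    0 ≤ t ^ (a - 1) * (1 - t) ^ (b - 1) :=
  mul_nonneg (rpow_nonneg ht₀ _) (rpow_nonneg (by linarith) _)

lemma ofReal_rpow_mul_one_sub_rpow {t : ℝ} (ht₀ : 0 ≤ t) (ht₁ : t ≤ 1) :
    ((t ^ (a - 1) * (1 - t) ^ (b - 1) : ℝ) : ℂ) =
      (t : ℂ) ^ ((a : ℂ) - 1) * (1 - (t : ℂ)) ^ ((b : ℂ) - 1) := by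
  rw [Complex.ofReal_mul, Complex.ofReal_cpow ht₀, Complex.ofReal_cpow (by linarith)]
  push_cast
  rfl

lemma betaIntegral_ofReal :
    Complex.betaIntegral a b = ((∫ t in (0 : ℝ)..1, t ^ (a - 1) * (1 - t) ^ (b - 1) : ℝ) : ℂ) := by
  rw [← intervalIntegral.integral_ofReal, Complex.betaIntegral]
  refine intervalIntegral.integral_congr fun t ht => ?_
  rw [uIcc_of_le zero_le_one] at ht
  exact (ofReal_rpow_mul_one_sub_rpow ht.1 ht.2).symm

lemma intervalIntegrable_rpow_mul_one_sub_rpow (ha : 0 < a) (hb : 0 < b) :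
    IntervalIntegrable (fun t => t ^ (a - 1) * (1 - t) ^ (b - 1)) volume 0 1 := by
  refine (Complex.betaIntegral_convergent (u := a) (v := b) (by simpa) (by simpa)).norm.congr
    fun t ht => ?_
  rw [uIoc_of_le zero_le_one] at ht
  rw [← ofReal_rpow_mul_one_sub_rpow ht.1.le ht.2, Complex.norm_real,
    Real.norm_of_nonneg (rpow_mul_one_sub_rpow_nonneg ht.1.le ht.2)]

lemma integral_rpow_mul_one_sub_rpow (ha : 0 < a) (hb : 0 < b) :
    ∫ t in (0 : ℝ)..1, t ^ (a - 1) * (1 - t) ^ (b - 1) = ProbabilityTheory.beta a b := by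
  rw [ProbabilityTheory.beta_eq_betaIntegralReal a b ha hb, betaIntegral_ofReal,
    Complex.ofReal_re]

end BetaIntegral

/-- For `0 < a` and `0 < b` this is `B(a, b) ₁F₁(a; a + b; -z)` (Euler's integral). -/
def betaLaplace (a b z : ℝ) : ℝ :=
  ∫ t in (0 : ℝ)..1, exp (-(z * t)) * (t ^ (a - 1) * (1 - t) ^ (b - 1))

section BetaLaplace

variable {a b : ℝ}

lemma hasSum_betaLaplace (ha : 0 < a) (hb : 0 < b) (z : ℝ) :
    HasSum (fun n : ℕ => (-z) ^ n / n.factorial * ProbabilityTheory.beta (a + n) b)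
      (betaLaplace a b z) := by
  set w := fun t : ℝ => t ^ (a - 1) * (1 - t) ^ (b - 1)
  have hterm : ∀ n : ℕ, ∫ t in (0 : ℝ)..1, (-(z * t)) ^ n / n.factorial * w t
      = (-z) ^ n / n.factorial * ProbabilityTheory.beta (a + n) b := by
    intro n
    rw [← integral_rpow_mul_one_sub_rpow (by positivity) hb,
      ← intervalIntegral.integral_const_mul]
    refine intervalIntegral.integral_congr_ae (ae_of_all _ fun t ht => ?_)
    rw [uIoc_of_le zero_le_one] at ht
    rw [show a + n - 1 = n + (a - 1) by ring, rpow_add ht.1, rpow_natCast, neg_mul_eq_neg_mul,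
      mul_pow]
    ring
  simp_rw [← hterm]
  refine intervalIntegral.hasSum_integral_of_dominated_convergence
    (fun n t => |z| ^ n / n.factorial * w t)
    (fun n => Measurable.aestronglyMeasurable (by fun_prop)) (fun n => ae_of_all _ fun t ht => ?_)
    (ae_of_all _ fun t _ => (Real.summable_pow_div_factorial |z|).mul_right (w t)) ?_
    (ae_of_all _ fun t _ => ?_)
  · rw [uIoc_of_le zero_le_one] at ht
    have hw : 0 ≤ w t := rpow_mul_one_sub_rpow_nonneg ht.1.le ht.2
    rw [norm_mul, norm_div, norm_pow, norm_neg, norm_mul, Real.norm_of_nonneg ht.1.le,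
      Real.norm_of_nonneg hw, RCLike.norm_natCast, Real.norm_eq_abs, mul_pow]
    gcongr
    exact mul_le_of_le_one_right (by positivity) (pow_le_one₀ ht.1.le ht.2)
  · simp_rw [tsum_mul_right]
    exact (intervalIntegrable_rpow_mul_one_sub_rpow ha hb).const_mul _
  · rw [Real.exp_eq_exp_ℝ]
    exact (NormedSpace.expSeries_div_hasSum_exp _).mul_right (w t)

lemma tendsto_betaLaplace_atTop (ha : 0 < a) (hb : 0 < b) :
    Tendsto (betaLaplace a b) atTop (𝓝 0) := by
  have h := intervalIntegral.tendsto_integral_filter_of_dominated_convergence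
    (f := fun _ => (0 : ℝ)) (l := atTop)
    (F := fun z t => exp (-(z * t)) * (t ^ (a - 1) * (1 - t) ^ (b - 1))) _
    (Eventually.of_forall fun z => Measurable.aestronglyMeasurable (by fun_prop))
    ?_ (intervalIntegrable_rpow_mul_one_sub_rpow ha hb) (ae_of_all _ fun t ht => ?_)
  · rw [intervalIntegral.integral_zero] at h
    exact h
  · filter_upwards [eventually_ge_atTop 0] with z hz
    refine ae_of_all _ fun t ht => ?_
    rw [uIoc_of_le zero_le_one] at ht
    have hw := rpow_mul_one_sub_rpow_nonneg (a := a) (b := b) ht.1.le ht.2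
    rw [norm_mul, Real.norm_of_nonneg hw, Real.norm_of_nonneg (exp_nonneg _)]
    refine mul_le_of_le_one_left hw (exp_le_one_iff.mpr ?_)
    nlinarith [ht.1]
  · rw [uIoc_of_le zero_le_one] at ht
    have hexp : Tendsto (fun z : ℝ => -(z * t)) atTop atBot :=
      tendsto_neg_atTop_atBot.comp (tendsto_id.atTop_mul_const ht.1)
    simpa using (tendsto_exp_atBot.comp hexp).mul_const (t ^ (a - 1) * (1 - t) ^ (b - 1))

lemma rpow_mul_betaLaplace {z : ℝ} (hz : 0 < z) :
    z ^ a * betaLaplace a b z =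
      ∫ u in (0 : ℝ)..z, exp (-u) * (u ^ (a - 1) * (1 - u / z) ^ (b - 1)) := by
  have hsub := intervalIntegral.integral_comp_mul_left (a := 0) (b := 1)
    (fun u => exp (-u) * ((u / z) ^ (a - 1) * (1 - u / z) ^ (b - 1))) hz.ne'
  simp only [mul_div_cancel_left₀ _ hz.ne', mul_zero, mul_one] at hsub
  rw [betaLaplace, hsub, smul_eq_mul, ← mul_assoc, ← div_eq_mul_inv, ← rpow_sub_one hz.ne',
    ← intervalIntegral.integral_const_mul]
  refine intervalIntegral.integral_congr fun u hu => ?_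
  rw [uIcc_of_le hz.le] at hu
  rw [mul_left_comm, ← mul_assoc (z ^ (a - 1)), ← mul_rpow hz.le (div_nonneg hu.1 hz.le),
    mul_div_cancel₀ _ hz.ne']

lemma tendsto_rpow_mul_betaLaplace (ha : 0 < a) (hb : 1 ≤ b) :
    Tendsto (fun z => z ^ a * betaLaplace a b z) atTop (𝓝 (Gamma a)) := by
  set G : ℝ → ℝ → ℝ := fun z => (Ioc 0 z).indicator
    fun u => exp (-u) * (u ^ (a - 1) * (1 - u / z) ^ (b - 1))
  have hG : ∀ᶠ z in atTop, ∫ u in Ioi 0, G z u = z ^ a * betaLaplace a b z := by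
    filter_upwards [eventually_gt_atTop 0] with z hz
    rw [rpow_mul_betaLaplace hz, intervalIntegral.integral_of_le hz.le,
      integral_indicator measurableSet_Ioc, Measure.restrict_restrict measurableSet_Ioc,
      inter_eq_left.mpr Ioc_subset_Ioi_self]
  rw [Gamma_eq_integral ha]
  refine (tendsto_integral_filter_of_dominated_convergence _
    (Eventually.of_forall fun z =>
      (Measurable.indicator (by fun_prop) measurableSet_Ioc).aestronglyMeasurable)
    (Eventually.of_forall fun z => ?_) (GammaIntegral_convergent ha) ?_).congr' hG
  · refine (ae_restrict_iff' measurableSet_Ioi).mpr (ae_of_all _ fun u (hu₀ : 0 < u) => ?_)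
    simp only [indicator_apply]
    split_ifs with hu
    · have h₀ : 0 ≤ 1 - u / z := sub_nonneg.mpr ((div_le_one (hu.1.trans_le hu.2)).mpr hu.2)
      have h₁ : 1 - u / z ≤ 1 := sub_le_self _ (div_nonneg hu.1.le (hu.1.le.trans hu.2))
      rw [Real.norm_of_nonneg (by positivity), ← mul_assoc]
      exact mul_le_of_le_one_right (by positivity) (rpow_le_one h₀ h₁ (by linarith))
    · rw [norm_zero]
      positivity
  · refine (ae_restrict_iff' measurableSet_Ioi).mpr (ae_of_all _ fun u (hu : 0 < u) => ?_)
    have hlim : Tendsto (fun z => (1 - u / z) ^ (b - 1)) atTop (𝓝 1) := by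
      simpa using ((tendsto_const_nhds.div_atTop tendsto_id).const_sub 1).rpow_const
        (Or.inl (by norm_num)) (p := b - 1)
    refine Tendsto.congr' ?_ (by simpa [mul_assoc] using hlim.const_mul (exp (-u) * u ^ (a - 1)))
    filter_upwards [eventually_ge_atTop u] with z hz
    simp only [indicator_of_mem (show u ∈ Ioc 0 z from ⟨hu, hz⟩)]

end BetaLaplace

lemma Gamma_add_nat {s : ℝ} (hs : 0 < s) (n : ℕ) :
    Gamma (s + n) = (ascPochhammer ℝ n).eval s * Gamma s := by
  induction n with
  | zero => simp
  | succ n ih =>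
    rw [Nat.cast_succ, ← add_assoc, Gamma_add_one (by positivity), ih, ascPochhammer_succ_eval]
    ring

lemma ascPochhammer_succ_eval_neg_half (n : ℕ) :
    (ascPochhammer ℝ (n + 1)).eval (-(1 / 2)) =
      -(1 / 2) * (ascPochhammer ℝ n).eval (1 / 2) := by
  rw [ascPochhammer_succ_left, Polynomial.eval_mul, Polynomial.eval_comp]
  norm_num

lemma beta_half_add_nat_half (n : ℕ) :
    ProbabilityTheory.beta (1 / 2 + n) (1 / 2) =
      π * (ascPochhammer ℝ n).eval (1 / 2) / n.factorial := by
  rw [ProbabilityTheory.beta, Gamma_add_nat one_half_pos,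
    show 1 / 2 + n + 1 / 2 = (n : ℝ) + 1 by ring, Gamma_nat_eq_factorial, Gamma_one_half_eq,
    mul_assoc, mul_self_sqrt pi_pos.le]
  ring

lemma beta_half_add_nat_three_halves (n : ℕ) :
    ProbabilityTheory.beta (1 / 2 + n) (3 / 2) =
      π * (ascPochhammer ℝ n).eval (1 / 2) / (2 * (n + 1).factorial) := by
  rw [ProbabilityTheory.beta, Gamma_add_nat one_half_pos,
    show 1 / 2 + n + 3 / 2 = ((n + 1 : ℕ) : ℝ) + 1 by push_cast; ring, Gamma_nat_eq_factorial,
    show (3 / 2 : ℝ) = 1 / 2 + 1 by norm_num, Gamma_add_one one_half_pos.ne', Gamma_one_half_eq]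
  linear_combination (ascPochhammer ℝ n).eval (1 / 2) / (2 * (n + 1).factorial) *
    mul_self_sqrt pi_pos.le

-- The coefficients of `z ₁F₁(1/2; 2; -z)` are those of `Lhalf z - ₁F₁(1/2; 1; -z)`, shifted by one.
lemma Lhalf_eq_betaLaplace (z : ℝ) :
    Lhalf z = betaLaplace (1 / 2) (1 / 2) z / π + 2 * z / π * betaLaplace (1 / 2) (3 / 2) z := by
  set P : ℕ → ℝ := fun n => (ascPochhammer ℝ n).eval (1 / 2)
  set c : ℕ → ℝ := fun n =>
    (ascPochhammer ℝ n).eval (-(1 / 2)) / (n.factorial : ℝ) ^ 2 * (-z) ^ n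
  set d : ℕ → ℝ := fun n => (-z) ^ n * P n / (n.factorial : ℝ) ^ 2
  have hd : HasSum d (betaLaplace (1 / 2) (1 / 2) z / π) :=
    ((hasSum_betaLaplace one_half_pos one_half_pos z).div_const π).congr_fun fun n => by
      simp only [d, P, beta_half_add_nat_half]
      field_simp
  have hshift : HasSum (fun n => c (n + 1) - d (n + 1))
      (2 * z / π * betaLaplace (1 / 2) (3 / 2) z) :=
    ((hasSum_betaLaplace one_half_pos (by norm_num) z).mul_left (2 * z / π)).congr_fun fun n => by
      simp only [c, d, P]
      rw [ascPochhammer_succ_eval_neg_half, ascPochhammer_succ_eval,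
        beta_half_add_nat_three_halves, Nat.factorial_succ]
      push_cast
      field_simp
      ring
  have hcd : HasSum (c - d) (2 * z / π * betaLaplace (1 / 2) (3 / 2) z) := by
    have hcd₀ : c 0 - d 0 = 0 := by simp [c, d, P]
    simpa only [Finset.sum_range_one, Pi.sub_apply, hcd₀, add_zero] using
      (hasSum_nat_add_iff (f := c - d) 1).mp hshift
  exact ((hd.add hcd).congr_fun fun n => (add_sub_cancel (d n) (c n)).symm).tsum_eq

lemma tendsto_Lhalf_div_sqrt : Tendsto (fun z => Lhalf z / √z) atTop (𝓝 (2 / √π)) := by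
  have h₁ := ((tendsto_betaLaplace_atTop one_half_pos one_half_pos).div_const π).div_atTop
    tendsto_sqrt_atTop
  have h₂ := (tendsto_rpow_mul_betaLaplace one_half_pos
    (by norm_num : (1 : ℝ) ≤ 3 / 2)).const_mul (2 / π)
  have hlim : 0 + 2 / π * Gamma (1 / 2) = 2 / √π := by
    rw [Gamma_one_half_eq, zero_add, div_mul_eq_mul_div, div_eq_div_iff (by positivity)
      (by positivity), mul_assoc, mul_self_sqrt pi_pos.le]
  rw [← hlim]
  refine (h₁.add h₂).congr' ?_
  filter_upwards [eventually_gt_atTop 0] with z hz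
  rw [Lhalf_eq_betaLaplace, ← sqrt_eq_rpow]
  field_simp
  rw [sq_sqrt hz.le]
  ring

/-- Asymptotics of `q(α,x) = L(αx)/√(1+x)`: it tends to `2√(α/π)` as `x → ∞`. -/
theorem q_tendsto_atTop (α : ℝ) (hα : 0 < α) :
    Tendsto (fun x : ℝ => Lhalf (α * x) / Real.sqrt (1 + x)) atTop
      (nhds (2 * Real.sqrt (α / Real.pi))) := by
  have hL := tendsto_Lhalf_div_sqrt.comp (tendsto_id.const_mul_atTop hα)
  have hratio : Tendsto (fun x : ℝ => √(α / (x⁻¹ + 1))) atTop (𝓝 √α) := by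
    simpa using (tendsto_const_nhds.div (tendsto_inv_atTop_zero.add_const 1) (by norm_num)).sqrt
  have hval : 2 / √π * √α = 2 * √(α / π) := by
    rw [sqrt_div' _ pi_pos.le]
    ring
  rw [← hval]
  refine (hL.mul hratio).congr' ?_
  filter_upwards [eventually_gt_atTop 0] with x hx
  have hαx : √(α * x) ≠ 0 := (sqrt_pos.mpr (by positivity)).ne'
  rw [show α / (x⁻¹ + 1) = α * x / (1 + x) by field_simp, sqrt_div' _ (by positivity)]
  simp only [Function.comp, id]
  field_simp
end
end

section
/- Define q(α,x) = L(α·x)/√(1+x) for real α > 0 and x ≥ 0. If α > 1/2 then there exists x₀ ≥ 0 such that x ↦ q(α,x) is strictly increasing on [x₀, ∞); if 0 < α < 1/2 then there exists x₀ ≥ 0 such that x ↦ q(α,x) is strictly decreasing on [x₀, ∞). -/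
/-!
The coefficients of `L = Lhalf` are bounded by `1 / n!`, a bound that termwise differentiation
preserves, so `L` is smooth with termwise derivatives and solves Kummer's equation
`z L'' + (1 + z) L' = L / 2`, i.e. `(z eᶻ L')' = eᶻ L / 2`. Integrating, `L' > 0` on `(0, z]`
as long as `L > 0` on `[0, z)`, which keeps `L ≥ L 0 = 1` on `[0, ∞)`; and as `L` increases,
`z eᶻ L' = ½ ∫₀ᶻ eᵗ L ≤ ½ eᶻ L`, i.e. `2 z L' ≤ L`.

Up to a positive factor, `q'(x)` is `2 (z + α) L'(z) - L(z)` at `z = α x`, and after division by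
`L(z) / z` this is `h(z) + α (1 + h(z) / z)` with `h(z) = z (2 z L'(z) / L(z) - 1)`. So everything
rests on `h(z) → -1/2`. By the ODE, `W_k(z) = eᶻ z^(-1/2) (z (2 z L' - L) + k L)`
(`Lhalf.comparisonFun k`) has derivative `eᶻ z^(-1/2) ((k - 1/2) L + k (L' - L / (2 z)))`:
`W_{1/2}` is antitone and `W_k` is eventually monotone for `k > 1/2`. Since
`h + k = W_k / (eᶻ L / √z)` and `eᶻ L / √z → ∞`, we get `limsup h ≤ -1/2` and
`liminf h ≥ -k` for every `k > 1/2`.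
-/

noncomputable section

open Filter Topology Set Real
open scoped Nat

def derivCoeff (a : ℕ → ℝ) (n : ℕ) : ℝ := (n + 1) * a (n + 1)

section FactorialBound

variable {a : ℕ → ℝ} {C : ℝ}

theorem abs_derivCoeff_le (ha : ∀ n, |a n| ≤ C / n !) (n : ℕ) :
    |derivCoeff a n| ≤ C / n ! := by
  rw [derivCoeff, abs_mul, abs_of_pos (by positivity), ← le_div_iff₀' (by positivity)]
  calc |a (n + 1)| ≤ C / (n + 1)! := ha (n + 1)
    _ = C / n ! / (n + 1) := by push_cast [Nat.factorial_succ]; rw [div_div, mul_comm]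

theorem summable_mul_pow_of_abs_le (ha : ∀ n, |a n| ≤ C / n !) (z : ℝ) :
    Summable fun n => a n * z ^ n := by
  refine .of_norm_bounded ((Real.summable_pow_div_factorial |z|).mul_left C) fun n => ?_
  rw [norm_mul, norm_pow, Real.norm_eq_abs, Real.norm_eq_abs]
  calc |a n| * |z| ^ n ≤ C / n ! * |z| ^ n := by gcongr; exact ha n
    _ = C * (|z| ^ n / n !) := by rw [mul_div_assoc', div_mul_eq_mul_div]

theorem hasDerivAt_tsum_mul_pow (ha : ∀ n, |a n| ≤ C / n !) (y : ℝ) :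
    HasDerivAt (fun z => ∑' n, a n * z ^ n) (∑' n, derivCoeff a n * y ^ n) y := by
  set R := |y| + 1
  have hR : 1 ≤ R := le_add_of_nonneg_left (abs_nonneg y)
  have hbound : ∀ n, ∀ z ∈ Metric.ball (0 : ℝ) R,
      ‖a n * (n * z ^ (n - 1))‖ ≤ C * ((2 * R) ^ n / n !) := by
    intro n z hz
    rw [mem_ball_zero_iff, Real.norm_eq_abs] at hz
    have hn : (n : ℝ) ≤ 2 ^ n := by exact_mod_cast n.lt_two_pow_self.le
    have hz' : |z| ^ (n - 1) ≤ R ^ n :=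
      (pow_le_pow_left₀ (abs_nonneg z) hz.le _).trans (pow_le_pow_right₀ hR (n.sub_le 1))
    simp only [norm_mul, norm_pow, Real.norm_eq_abs, Nat.abs_cast]
    calc |a n| * (n * |z| ^ (n - 1)) ≤ C / n ! * (2 ^ n * R ^ n) :=
          mul_le_mul (ha n) (by gcongr) (by positivity) ((abs_nonneg _).trans (ha n))
      _ = C * ((2 * R) ^ n / n !) := by rw [mul_pow]; ring
  have hderiv := hasDerivAt_tsum_of_isPreconnected
    ((Real.summable_pow_div_factorial (2 * R)).mul_left C) Metric.isOpen_ball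
    (convex_ball 0 R).isPreconnected (fun n z _ => (hasDerivAt_pow n z).const_mul (a n)) hbound
    (Metric.mem_ball_self (by positivity)) (summable_mul_pow_of_abs_le ha 0)
    (by rw [mem_ball_zero_iff, Real.norm_eq_abs]; exact lt_add_one _)
  have hshift : ∑' n, a n * (n * y ^ (n - 1)) = ∑' n, derivCoeff a n * y ^ n := by
    have hterm : ∀ n, a (n + 1) * ((n + 1 : ℕ) * y ^ (n + 1 - 1)) = derivCoeff a n * y ^ n :=
      fun n => by rw [derivCoeff, Nat.add_sub_cancel]; push_cast; ring
    rw [tsum_eq_zero_add' ((summable_mul_pow_of_abs_le (abs_derivCoeff_le ha) y).congr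
      fun n => (hterm n).symm)]
    simp only [hterm, CharP.cast_eq_zero, zero_mul, mul_zero, zero_add]
  exact hshift ▸ hderiv

theorem hasSum_natCast_mul_mul_pow (ha : ∀ n, |a n| ≤ C / n !) (z : ℝ) :
    HasSum (fun n => n * a n * z ^ n) (z * ∑' n, derivCoeff a n * z ^ n) := by
  rw [← hasSum_nat_add_iff' 1]
  simpa [derivCoeff, pow_succ, ← tsum_mul_left, mul_comm, mul_assoc, mul_left_comm] using
    (summable_mul_pow_of_abs_le (abs_derivCoeff_le ha) z).hasSum.mul_left z

end FactorialBound

theorem exists_strictMonoOn_Ici_of_eventually_deriv_pos {f f' : ℝ → ℝ}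
    (hf : ∀ᶠ x in atTop, HasDerivAt f (f' x) x) (hf' : ∀ᶠ x in atTop, 0 < f' x) (c : ℝ) :
    ∃ x₀, c ≤ x₀ ∧ StrictMonoOn f (Ici x₀) := by
  obtain ⟨x₁, h⟩ := (hf.and hf').exists_forall_of_atTop
  have h' (x : ℝ) (hx : max c x₁ ≤ x) := h x ((le_max_right c x₁).trans hx)
  refine ⟨max c x₁, le_max_left c x₁, strictMonoOn_of_deriv_pos (convex_Ici _)
    (fun x hx => (h' x hx).1.continuousAt.continuousWithinAt) fun x hx => ?_⟩
  obtain ⟨hderiv, hpos⟩ := h' x (interior_subset hx)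
  exact hderiv.deriv ▸ hpos

theorem exists_strictAntiOn_Ici_of_eventually_deriv_neg {f f' : ℝ → ℝ}
    (hf : ∀ᶠ x in atTop, HasDerivAt f (f' x) x) (hf' : ∀ᶠ x in atTop, f' x < 0) (c : ℝ) :
    ∃ x₀, c ≤ x₀ ∧ StrictAntiOn f (Ici x₀) := by
  obtain ⟨x₀, hx₀, hmono⟩ := exists_strictMonoOn_Ici_of_eventually_deriv_pos
    (hf.mono fun x hx => hx.neg) (hf'.mono fun x hx => neg_pos.2 hx) c
  exact ⟨x₀, hx₀, fun a ha b hb hab => neg_lt_neg_iff.1 (hmono ha hb hab)⟩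

namespace Lhalf

def coeff (n : ℕ) : ℝ := (ascPochhammer ℝ n).eval (-(1 / 2)) / (n ! : ℝ) ^ 2 * (-1) ^ n

theorem coeff_zero : coeff 0 = 1 := by simp [coeff]

theorem succ_mul_derivCoeff_coeff (n : ℕ) :
    (n + 1) * derivCoeff coeff n = (1 / 2 - n) * coeff n := by
  have hpoch : (ascPochhammer ℝ (n + 1)).eval (-(1 / 2)) =
      (ascPochhammer ℝ n).eval (-(1 / 2)) * (n - 1 / 2) := by
    rw [ascPochhammer_succ_right, Polynomial.eval_mul, Polynomial.eval_add, Polynomial.eval_X,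
      Polynomial.eval_natCast]
    ring
  rw [derivCoeff, coeff, coeff, hpoch, Nat.factorial_succ]
  push_cast
  field_simp
  ring

theorem abs_coeff_le (n : ℕ) : |coeff n| ≤ 1 / n ! := by
  induction n with
  | zero => simp [coeff_zero]
  | succ n ih =>
    have hrec := congrArg abs (succ_mul_derivCoeff_coeff n)
    have hhalf : |1 / 2 - (n : ℝ)| ≤ n + 1 := abs_le.2 ⟨by linarith, by linarith⟩
    have hpos : (0 : ℝ) < n + 1 := by positivity
    rw [derivCoeff, abs_mul, abs_mul, abs_mul, abs_of_pos hpos] at hrec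
    have hstep : (n + 1) * |coeff (n + 1)| ≤ 1 / n ! := le_of_mul_le_mul_left
      (hrec ▸ mul_le_mul hhalf ih (abs_nonneg _) hpos.le) hpos
    calc |coeff (n + 1)| = (n + 1) * |coeff (n + 1)| / (n + 1) := by field_simp
      _ ≤ 1 / n ! / (n + 1) := by gcongr
      _ = 1 / (n + 1)! := by push_cast [Nat.factorial_succ]; field_simp

end Lhalf

theorem Lhalf_eq_tsum : Lhalf = fun z => ∑' n, Lhalf.coeff n * z ^ n := by
  ext z
  exact tsum_congr fun n => by rw [Lhalf.coeff, neg_pow]; ring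

theorem hasDerivAt_Lhalf_tsum (z : ℝ) :
    HasDerivAt Lhalf (∑' n, derivCoeff Lhalf.coeff n * z ^ n) z :=
  Lhalf_eq_tsum ▸ hasDerivAt_tsum_mul_pow Lhalf.abs_coeff_le z

theorem deriv_Lhalf : deriv Lhalf = fun z => ∑' n, derivCoeff Lhalf.coeff n * z ^ n :=
  funext fun z => (hasDerivAt_Lhalf_tsum z).deriv

theorem hasDerivAt_deriv_Lhalf_tsum (z : ℝ) :
    HasDerivAt (deriv Lhalf) (∑' n, derivCoeff (derivCoeff Lhalf.coeff) n * z ^ n) z :=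
  deriv_Lhalf ▸ hasDerivAt_tsum_mul_pow (abs_derivCoeff_le Lhalf.abs_coeff_le) z

theorem hasDerivAt_Lhalf (z : ℝ) : HasDerivAt Lhalf (deriv Lhalf z) z :=
  (hasDerivAt_Lhalf_tsum z).differentiableAt.hasDerivAt

theorem hasDerivAt_deriv_Lhalf (z : ℝ) : HasDerivAt (deriv Lhalf) (deriv (deriv Lhalf) z) z :=
  (hasDerivAt_deriv_Lhalf_tsum z).differentiableAt.hasDerivAt

theorem continuous_Lhalf : Continuous Lhalf :=
  continuous_iff_continuousAt.2 fun z => (hasDerivAt_Lhalf z).continuousAt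

theorem Lhalf_zero : Lhalf 0 = 1 := by
  simp only [Lhalf_eq_tsum]
  rw [tsum_eq_single 0 fun n hn => by simp [hn], Lhalf.coeff_zero]
  simp

theorem Lhalf_ode (z : ℝ) :
    z * deriv (deriv Lhalf) z + (1 + z) * deriv Lhalf z = Lhalf z / 2 := by
  have ha := Lhalf.abs_coeff_le
  have ha' := abs_derivCoeff_le ha
  have hsum := (((hasSum_natCast_mul_mul_pow ha' z).add
    (summable_mul_pow_of_abs_le ha' z).hasSum).add (hasSum_natCast_mul_mul_pow ha z)).sub
    ((summable_mul_pow_of_abs_le ha z).hasSum.div_const 2)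
  have hzero : ∀ n : ℕ, n * derivCoeff Lhalf.coeff n * z ^ n +
      derivCoeff Lhalf.coeff n * z ^ n + n * Lhalf.coeff n * z ^ n -
      Lhalf.coeff n * z ^ n / 2 = 0 := fun n => by
    linear_combination z ^ n * Lhalf.succ_mul_derivCoeff_coeff n
  simp only [hzero] at hsum
  rw [(hasDerivAt_deriv_Lhalf_tsum z).deriv, deriv_Lhalf, Lhalf_eq_tsum]
  linear_combination hsum.unique hasSum_zero

theorem integral_exp_mul_Lhalf_div_two (z : ℝ) :
    ∫ t in 0..z, exp t * Lhalf t / 2 = z * exp z * deriv Lhalf z := by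
  have hderiv (t : ℝ) :
      HasDerivAt (fun t => t * exp t * deriv Lhalf t) (exp t * Lhalf t / 2) t := by
    refine (((hasDerivAt_id' t).mul (hasDerivAt_exp t)).mul
      (hasDerivAt_deriv_Lhalf t)).congr_deriv ?_
    simp only [Pi.mul_apply]
    linear_combination exp t * Lhalf_ode t
  rw [intervalIntegral.integral_eq_sub_of_hasDerivAt (fun t _ => hderiv t)
    (((continuous_exp.mul continuous_Lhalf).div_const 2).intervalIntegrable 0 z)]
  simp

theorem deriv_Lhalf_pos_of_forall_Ioo {z : ℝ} (hz : 0 < z) (h : ∀ t ∈ Ioo 0 z, 0 < Lhalf t) :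
    0 < deriv Lhalf z := by
  have hint : 0 < ∫ t in 0..z, exp t * Lhalf t / 2 :=
    intervalIntegral.intervalIntegral_pos_of_pos_on
      (((continuous_exp.mul continuous_Lhalf).div_const 2).intervalIntegrable 0 z)
      (fun t ht => by have := h t ht; positivity) hz
  rw [integral_exp_mul_Lhalf_div_two] at hint
  exact pos_of_mul_pos_right hint (by positivity)

theorem Lhalf_pos {z : ℝ} (hz : 0 ≤ z) : 0 < Lhalf z := by
  by_contra! hneg
  obtain ⟨s, ⟨⟨hs0, hsz⟩, hLs⟩, hmin⟩ :=
    (isCompact_Icc.inter_right (isClosed_le continuous_Lhalf continuous_const)).exists_isLeast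
      (⟨z, ⟨hz, le_rfl⟩, hneg⟩ : (Icc 0 z ∩ {t | Lhalf t ≤ 0}).Nonempty)
  replace hLs : Lhalf s ≤ 0 := hLs
  have hpos : ∀ t ∈ Ico 0 s, 0 < Lhalf t := fun t ht => by
    by_contra! h
    exact (hmin ⟨⟨ht.1, ht.2.le.trans hsz⟩, h⟩).not_gt ht.2
  have hs : 0 < s := hs0.lt_of_ne fun h => by
    rw [← h, Lhalf_zero] at hLs
    norm_num at hLs
  have hmono : StrictMonoOn Lhalf (Icc 0 s) :=
    strictMonoOn_of_deriv_pos (convex_Icc 0 s) continuous_Lhalf.continuousOn fun t ht => by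
      rw [interior_Icc] at ht
      exact deriv_Lhalf_pos_of_forall_Ioo ht.1 fun u hu => hpos u ⟨hu.1.le, hu.2.trans ht.2⟩
  have := hmono (left_mem_Icc.2 hs.le) (right_mem_Icc.2 hs.le) hs
  rw [Lhalf_zero] at this
  linarith

theorem deriv_Lhalf_pos {z : ℝ} (hz : 0 < z) : 0 < deriv Lhalf z :=
  deriv_Lhalf_pos_of_forall_Ioo hz fun _ ht => Lhalf_pos ht.1.le

theorem strictMonoOn_Lhalf : StrictMonoOn Lhalf (Ici 0) :=
  strictMonoOn_of_deriv_pos (convex_Ici 0) continuous_Lhalf.continuousOn fun t ht => by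
    rw [interior_Ici] at ht
    exact deriv_Lhalf_pos ht

theorem one_le_Lhalf {z : ℝ} (hz : 0 ≤ z) : 1 ≤ Lhalf z :=
  Lhalf_zero ▸ strictMonoOn_Lhalf.monotoneOn self_mem_Ici hz hz

theorem two_mul_mul_deriv_Lhalf_le {z : ℝ} (hz : 0 < z) : 2 * z * deriv Lhalf z ≤ Lhalf z := by
  have hint : ∫ t in 0..z, exp t * Lhalf t / 2 ≤ ∫ t in 0..z, exp t * Lhalf z / 2 :=
    intervalIntegral.integral_mono_on hz.le
      (((continuous_exp.mul continuous_Lhalf).div_const 2).intervalIntegrable 0 z)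
      (((continuous_exp.mul continuous_const).div_const 2).intervalIntegrable 0 z)
      fun t ht => by
        gcongr
        exact strictMonoOn_Lhalf.monotoneOn ht.1 (ht.1.trans ht.2) ht.2
  rw [integral_exp_mul_Lhalf_div_two, intervalIntegral.integral_div,
    intervalIntegral.integral_mul_const, integral_exp, exp_zero] at hint
  have hL := Lhalf_pos hz.le
  refine le_of_mul_le_mul_left ?_ (exp_pos z)
  linarith

theorem tendsto_exp_mul_Lhalf_div_sqrt : Tendsto (fun z => exp z * Lhalf z / √z) atTop atTop := by
  refine tendsto_atTop_mono' atTop ?_ (tendsto_exp_div_rpow_atTop (1 / 2))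
  filter_upwards [eventually_ge_atTop 0] with z hz
  rw [← sqrt_eq_rpow]
  gcongr
  exact le_mul_of_one_le_right (exp_pos z).le (one_le_Lhalf hz)

namespace Lhalf

def comparisonFun (k z : ℝ) : ℝ :=
  exp z / √z * (z * (2 * z * deriv Lhalf z - Lhalf z) + k * Lhalf z)

theorem hasDerivAt_comparisonFun (k : ℝ) {z : ℝ} (hz : 0 < z) :
    HasDerivAt (comparisonFun k)
      (exp z / √z * ((k - 1 / 2) * Lhalf z + k * (deriv Lhalf z - Lhalf z / (2 * z)))) z := by
  have hs : 0 < √z := sqrt_pos.2 hz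
  have hL := hasDerivAt_Lhalf z
  have hP := ((hasDerivAt_id' z).mul ((((hasDerivAt_id' z).const_mul 2).mul
    (hasDerivAt_deriv_Lhalf z)).sub hL)).add (hL.const_mul k)
  refine (((hasDerivAt_exp z).div (hasDerivAt_sqrt hz.ne') hs.ne').mul hP).congr_deriv ?_
  simp only [Pi.mul_apply, Pi.sub_apply, Pi.add_apply, Pi.div_apply]
  field_simp
  rw [sq_sqrt hz.le]
  linear_combination (4 * z ^ 3) * Lhalf_ode z

theorem antitoneOn_comparisonFun_half : AntitoneOn (comparisonFun (1 / 2)) (Ioi 0) := by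
  refine antitoneOn_of_deriv_nonpos (convex_Ioi 0)
    (fun z hz => (hasDerivAt_comparisonFun _ hz).continuousAt.continuousWithinAt)
    (fun z hz => (hasDerivAt_comparisonFun _ (interior_subset hz)).differentiableAt
      |>.differentiableWithinAt) fun z hz => ?_
  replace hz : 0 < z := interior_subset hz
  rw [(hasDerivAt_comparisonFun _ hz).deriv]
  have hle : deriv Lhalf z ≤ Lhalf z / (2 * z) := by
    rw [le_div_iff₀ (by positivity)]
    linarith [two_mul_mul_deriv_Lhalf_le hz]
  exact mul_nonpos_of_nonneg_of_nonpos (by positivity) (by linarith)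

theorem monotoneOn_comparisonFun {k : ℝ} (hk : 1 / 2 < k) :
    MonotoneOn (comparisonFun k) (Ici (k / (2 * k - 1))) := by
  have hm : 0 < k / (2 * k - 1) := div_pos (by linarith) (by linarith)
  refine monotoneOn_of_deriv_nonneg (convex_Ici _)
    (fun z hz => (hasDerivAt_comparisonFun _ (hm.trans_le hz)).continuousAt.continuousWithinAt)
    (fun z hz => (hasDerivAt_comparisonFun _ (hm.trans_le (interior_subset hz))).differentiableAt
      |>.differentiableWithinAt) fun z hz => ?_
  replace hz : k / (2 * k - 1) ≤ z := interior_subset hz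
  have hz0 : 0 < z := hm.trans_le hz
  rw [(hasDerivAt_comparisonFun _ hz0).deriv]
  have hcoef : 0 ≤ k - 1 / 2 - k / (2 * z) := by
    rw [div_le_iff₀ (by linarith)] at hz
    rw [sub_nonneg, div_le_iff₀ (by positivity)]
    linarith
  have hsplit : (k - 1 / 2) * Lhalf z + k * (deriv Lhalf z - Lhalf z / (2 * z)) =
      (k - 1 / 2 - k / (2 * z)) * Lhalf z + k * deriv Lhalf z := by ring
  rw [hsplit]
  have := Lhalf_pos hz0.le
  have := deriv_Lhalf_pos hz0
  positivity

theorem mul_two_mul_logDeriv_sub_one_add_eq_comparisonFun_div (k : ℝ) {z : ℝ} (hz : 0 < z) :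
    z * (2 * z * logDeriv Lhalf z - 1) + k = comparisonFun k z / (exp z * Lhalf z / √z) := by
  have hL := Lhalf_pos hz.le
  have hs : 0 < √z := sqrt_pos.2 hz
  rw [comparisonFun, logDeriv_apply]
  field_simp

end Lhalf

open Lhalf in
theorem tendsto_mul_two_mul_logDeriv_Lhalf_sub_one :
    Tendsto (fun z => z * (2 * z * logDeriv Lhalf z - 1)) atTop (𝓝 (-(1 / 2))) := by
  have hF := tendsto_exp_mul_Lhalf_div_sqrt
  have hdecay (c : ℝ) : Tendsto (fun z => c / (exp z * Lhalf z / √z)) atTop (𝓝 0) :=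
    tendsto_const_nhds.div_atTop hF
  refine tendsto_order.2 ⟨fun a ha => ?_, fun b hb => ?_⟩
  · obtain ⟨k, rfl⟩ : ∃ k, a = 1 / 2 - 2 * k := ⟨(1 / 2 - a) / 2, by ring⟩
    have hk : 1 / 2 < k := by linarith
    set m := k / (2 * k - 1)
    filter_upwards [eventually_ge_atTop m, hF.eventually_gt_atTop 0,
      (hdecay (comparisonFun k m)).eventually (lt_mem_nhds (by linarith : 1 / 2 - k < 0))]
      with z hz hFz hsmall
    have hz0 : 0 < z := (div_pos (by linarith) (by linarith)).trans_le hz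
    have := div_le_div_of_nonneg_right (monotoneOn_comparisonFun hk self_mem_Ici hz hz) hFz.le
    linarith [mul_two_mul_logDeriv_sub_one_add_eq_comparisonFun_div k hz0]
  · filter_upwards [eventually_ge_atTop 1, hF.eventually_gt_atTop 0,
      (hdecay (comparisonFun (1 / 2) 1)).eventually (gt_mem_nhds (by linarith : 0 < b + 1 / 2))]
      with z hz hFz hsmall
    have hz0 : 0 < z := zero_lt_one.trans_le hz
    have := div_le_div_of_nonneg_right
      (antitoneOn_comparisonFun_half (mem_Ioi.2 one_pos) hz0 hz) hFz.le
    linarith [mul_two_mul_logDeriv_sub_one_add_eq_comparisonFun_div (1 / 2) hz0]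

theorem tendsto_mul_two_mul_add_mul_logDeriv_Lhalf_sub_one (α : ℝ) :
    Tendsto (fun z => z * (2 * (z + α) * logDeriv Lhalf z - 1)) atTop (𝓝 (α - 1 / 2)) := by
  have h := tendsto_mul_two_mul_logDeriv_Lhalf_sub_one
  have hlim := h.add ((h.mul tendsto_inv_atTop_zero).const_add 1 |>.const_mul α)
  rw [mul_zero, add_zero, mul_one, neg_add_eq_sub] at hlim
  refine hlim.congr' ?_
  filter_upwards [eventually_gt_atTop 0] with z hz
  field_simp
  ring

theorem two_mul_add_mul_deriv_Lhalf_sub_eq (α : ℝ) {z : ℝ} (hz : 0 < z) :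
    2 * (z + α) * deriv Lhalf z - Lhalf z =
      Lhalf z / z * (z * (2 * (z + α) * logDeriv Lhalf z - 1)) := by
  have hL := Lhalf_pos hz.le
  rw [logDeriv_apply]
  field_simp

theorem eventually_two_mul_add_mul_deriv_Lhalf_sub_pos {α : ℝ} (hα : 1 / 2 < α) :
    ∀ᶠ z in atTop, 0 < 2 * (z + α) * deriv Lhalf z - Lhalf z := by
  filter_upwards [eventually_gt_atTop 0,
    (tendsto_mul_two_mul_add_mul_logDeriv_Lhalf_sub_one α).eventually_const_lt (sub_pos.2 hα)]
    with z hz h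
  rw [two_mul_add_mul_deriv_Lhalf_sub_eq α hz]
  exact mul_pos (div_pos (Lhalf_pos hz.le) hz) h

theorem eventually_two_mul_add_mul_deriv_Lhalf_sub_neg {α : ℝ} (hα : α < 1 / 2) :
    ∀ᶠ z in atTop, 2 * (z + α) * deriv Lhalf z - Lhalf z < 0 := by
  filter_upwards [eventually_gt_atTop 0,
    (tendsto_mul_two_mul_add_mul_logDeriv_Lhalf_sub_one α).eventually_lt_const (sub_neg.2 hα)]
    with z hz h
  rw [two_mul_add_mul_deriv_Lhalf_sub_eq α hz]
  exact mul_neg_of_pos_of_neg (div_pos (Lhalf_pos hz.le) hz) h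

theorem hasDerivAt_Lhalf_mul_div_sqrt_one_add (α : ℝ) {x : ℝ} (hx : 0 < 1 + x) :
    HasDerivAt (fun x => Lhalf (α * x) / √(1 + x))
      ((2 * (α * x + α) * deriv Lhalf (α * x) - Lhalf (α * x)) / (2 * (1 + x) * √(1 + x)))
      x := by
  have hs : 0 < √(1 + x) := sqrt_pos.2 hx
  refine (((hasDerivAt_Lhalf (α * x)).comp x ((hasDerivAt_id' x).const_mul α)).div
    (((hasDerivAt_id' x).const_add 1).sqrt hx.ne') hs.ne').congr_deriv ?_
  simp only [Function.comp_apply]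
  field_simp
  rw [sq_sqrt hx.le]
  ring

/-- Eventual monotonicity of `q(α,x) = L(αx)/√(1+x)`: strictly increasing on some `[x₀,∞)`
when `α > 1/2`, strictly decreasing on some `[x₀,∞)` when `0 < α < 1/2`. -/
theorem q_eventual_monotonicity (α : ℝ) (hα : 0 < α)
    (q : ℝ → ℝ) (hq : q = fun x => Lhalf (α * x) / Real.sqrt (1 + x)) :
    (1 / 2 < α → ∃ x₀ : ℝ, 0 ≤ x₀ ∧ StrictMonoOn q (Set.Ici x₀)) ∧
    (α < 1 / 2 → ∃ x₀ : ℝ, 0 ≤ x₀ ∧ StrictAntiOn q (Set.Ici x₀)) := by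
  subst hq
  have hderiv : ∀ᶠ x in atTop, HasDerivAt _ _ x := (eventually_gt_atTop 0).mono fun x hx =>
    hasDerivAt_Lhalf_mul_div_sqrt_one_add α (by linarith : 0 < 1 + x)
  have hαx := tendsto_id.const_mul_atTop hα
  refine ⟨fun h => exists_strictMonoOn_Ici_of_eventually_deriv_pos hderiv ?_ 0,
    fun h => exists_strictAntiOn_Ici_of_eventually_deriv_neg hderiv ?_ 0⟩
  · filter_upwards [hαx.eventually (eventually_two_mul_add_mul_deriv_Lhalf_sub_pos h),
      eventually_gt_atTop 0] with x hE hx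
    exact div_pos hE (by positivity)
  · filter_upwards [hαx.eventually (eventually_two_mul_add_mul_deriv_Lhalf_sub_neg h),
      eventually_gt_atTop 0] with x hE hx
    exact div_neg_of_neg_of_pos hE (by positivity)
end
end

section
/- Let β_d, β_br, β_ru, τ̄ > 0, M > 0 and c ≥ 0 be real constants. For N ∈ ℕ define E_fav(N) = (β_d·M + N·√(M·π)·√(β_d β_br β_ru) + β_br·β_ru·M·N²)·τ̄ and E_unfav(N) = (β_d·M + N·√π·c·√(β_d β_br β_ru) + β_br·β_ru·M·(N + π·N(N−1)/4))·τ̄. Then (E_fav(N) − E_unfav(N))/E_unfav(N) → (4−π)/π as N → ∞. -/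
/-! Both mean SNRs are quadratic in `N`, so the relative gain tends to the ratio of the leading
coefficients of `E_fav - E_unfav` and `E_unfav`, namely `B τ (1 - π/4)` and `B τ π/4` with
`B = β_br β_ru M`. -/

open Filter Topology

lemma tendsto_quadratic_div_sq (a b c : ℝ) :
    Tendsto (fun N : ℕ => (a + b * N + c * (N : ℝ) ^ 2) / (N : ℝ) ^ 2) atTop (𝓝 c) := by
  have hinv : Tendsto (fun N : ℕ => (N : ℝ)⁻¹) atTop (𝓝 0) :=
    tendsto_inv_atTop_zero.comp tendsto_natCast_atTop_atTop
  have hlim : Tendsto (fun N : ℕ => a * ((N : ℝ)⁻¹ * (N : ℝ)⁻¹) + b * (N : ℝ)⁻¹ + c) atTop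
      (𝓝 (a * (0 * 0) + b * 0 + c)) :=
    ((tendsto_const_nhds.mul (hinv.mul hinv)).add (tendsto_const_nhds.mul hinv)).add
      tendsto_const_nhds
  rw [mul_zero, mul_zero, mul_zero, zero_add, zero_add] at hlim
  refine hlim.congr' ?_
  filter_upwards [eventually_ne_atTop 0] with N hN
  field_simp [Nat.cast_ne_zero.mpr hN]

lemma tendsto_quadratic_div_quadratic (a b c a' b' c' : ℝ) (hc' : c' ≠ 0) :
    Tendsto (fun N : ℕ => (a + b * N + c * (N : ℝ) ^ 2) / (a' + b' * N + c' * (N : ℝ) ^ 2))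
      atTop (𝓝 (c / c')) := by
  refine ((tendsto_quadratic_div_sq a b c).div (tendsto_quadratic_div_sq a' b' c') hc').congr' ?_
  filter_upwards [eventually_ne_atTop 0] with N hN
  exact div_div_div_cancel_right₀ (pow_ne_zero 2 (Nat.cast_ne_zero.mpr hN)) _ _

theorem relative_gain_limit_general
    (βd βbr βru τ M : ℝ) (hβbr : 0 < βbr) (hβru : 0 < βru)
    (hτ : 0 < τ) (hM : 0 < M) (c : ℝ)
    (Efav Eunfav : ℕ → ℝ)
    (hEfav : Efav = fun N : ℕ =>
      (βd * M + (N : ℝ) * Real.sqrt (M * Real.pi) * Real.sqrt (βd * βbr * βru)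
        + βbr * βru * M * (N : ℝ) ^ 2) * τ)
    (hEunfav : Eunfav = fun N : ℕ =>
      (βd * M + (N : ℝ) * Real.sqrt Real.pi * c * Real.sqrt (βd * βbr * βru)
        + βbr * βru * M * ((N : ℝ) + Real.pi * (N : ℝ) * ((N : ℝ) - 1) / 4)) * τ) :
    Tendsto (fun N : ℕ => (Efav N - Eunfav N) / Eunfav N) atTop
      (nhds ((4 - Real.pi) / Real.pi)) := by
  subst hEfav hEunfav
  set s := Real.sqrt (βd * βbr * βru)
  set B := βbr * βru * M * τ
  have hB : B ≠ 0 := by positivity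
  have hlim := tendsto_quadratic_div_quadratic 0
    ((Real.sqrt (M * Real.pi) - Real.sqrt Real.pi * c) * s * τ - B + B * Real.pi / 4)
    (B * (1 - Real.pi / 4)) (βd * M * τ) (Real.sqrt Real.pi * c * s * τ + B - B * Real.pi / 4)
    (B * Real.pi / 4) (by positivity)
  convert hlim using 2 with N
  · congr 1 <;> ring
  · field_simp

/-- The relative gain in mean SNR when moving from the unfavourable to the favourable channel
scenario tends to `(4-π)/π` as the number of RIS elements `N → ∞`. -/
theorem relative_gain_limit
    (βd βbr βru τ M : ℝ) (hβd : 0 < βd) (hβbr : 0 < βbr) (hβru : 0 < βru)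
    (hτ : 0 < τ) (hM : 0 < M) (c : ℝ) (hc : 0 ≤ c)
    (Efav Eunfav : ℕ → ℝ)
    (hEfav : Efav = fun N : ℕ =>
      (βd * M + (N : ℝ) * Real.sqrt (M * Real.pi) * Real.sqrt (βd * βbr * βru)
        + βbr * βru * M * (N : ℝ) ^ 2) * τ)
    (hEunfav : Eunfav = fun N : ℕ =>
      (βd * M + (N : ℝ) * Real.sqrt Real.pi * c * Real.sqrt (βd * βbr * βru)
        + βbr * βru * M * ((N : ℝ) + Real.pi * (N : ℝ) * ((N : ℝ) - 1) / 4)) * τ) :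
    Tendsto (fun N : ℕ => (Efav N - Eunfav N) / Eunfav N) atTop
      (nhds ((4 - Real.pi) / Real.pi)) :=
  relative_gain_limit_general βd βbr βru τ M hβbr hβru hτ hM c Efav Eunfav hEfav hEunfav
end
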